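/- Let n be a positive integer, let 0 ≤ μ < L < ∞, and let 0 < α ≤ min{1, 2μ/L}. Let f₁, f₂ ∈ F_{μ,L}(ℝⁿ) and f := f₁ − f₂. Let x, y, x′ ∈ ℝⁿ and subgradients g₁(x) ∈ ∂f₁(x), g₂(x) ∈ ∂f₂(x), g₁(x′) ∈ ∂f₁(x′), g₂(x′) ∈ ∂f₂(x′) be given, and suppose g₂(x) ∈ ∂f₁(y) (one DCA subproblem step from x to y) and x′ = y + α(y − x) (the boosted step). Then f(x′) + (1/(2L))‖g₁(x′) − g₂(x′)‖² + (1/L)(1/2 + αμ/L)‖g₁(x) − g₂(x)‖² ≤ f(x). -/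

import Mathlib

/-- `g` is a subgradient of the (convex) function `f` at `x`. -/
def SubgradAt {n : ℕ} (f : EuclideanSpace ℝ (Fin n) → ℝ)
    (g x : EuclideanSpace ℝ (Fin n)) : Prop :=
  ∀ y, f x + (inner ℝ g (y - x) : ℝ) ≤ f y

/-- `f` belongs to the class `F_{μ,L}(ℝⁿ)`: minimum curvature `μ`, maximum curvature `L`. -/
def MemFClass {n : ℕ} (μ L : ℝ) (f : EuclideanSpace ℝ (Fin n) → ℝ) : Prop :=
  ConvexOn ℝ Set.univ (fun x => f x - μ / 2 * ‖x‖ ^ 2) ∧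
  ConvexOn ℝ Set.univ (fun x => L / 2 * ‖x‖ ^ 2 - f x)

open RealInnerProductSpace

section Aux

variable {n : ℕ}

private lemma aux_le_of_forall_small {A B C : ℝ} (hC : 0 ≤ C)
    (H : ∀ t : ℝ, 0 < t → t ≤ 1 → A ≤ B + t * C) : A ≤ B := by
  by_contra hcon
  push_neg at hcon
  have hC1 : (0:ℝ) < C + 1 := by linarith
  have ht0 : (0:ℝ) < min 1 ((A - B) / (2 * (C + 1))) := by
    exact lt_min one_pos (div_pos (by linarith) (by linarith))
  have h1 := H _ ht0 (min_le_left _ _)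
  have hle : min 1 ((A - B) / (2 * (C + 1))) ≤ (A - B) / (2 * (C + 1)) := min_le_right _ _
  have h2 : min 1 ((A - B) / (2 * (C + 1))) * C ≤ (A - B) / (2 * (C + 1)) * C :=
    mul_le_mul_of_nonneg_right hle hC
  have h3 : (A - B) / (2 * (C + 1)) * C ≤ (A - B) / 2 := by
    rw [div_mul_eq_mul_div, div_le_div_iff₀ (by linarith) (by norm_num)]
    nlinarith
  linarith

private lemma subgrad_of_quad_lower {h : EuclideanSpace ℝ (Fin n) → ℝ}
    (hc : ConvexOn ℝ Set.univ h) {v s : EuclideanSpace ℝ (Fin n)} {K : ℝ} (hK : 0 ≤ K)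
    (H : ∀ u, h v + ⟪s, u - v⟫ - K / 2 * ‖u - v‖ ^ 2 ≤ h u) :
    SubgradAt h s v := by
  intro u
  refine aux_le_of_forall_small (C := K / 2 * ‖u - v‖ ^ 2) (by positivity) (fun t ht0 ht1 => ?_)
  have hcvx := hc.2 (Set.mem_univ v) (Set.mem_univ u)
    (show (0:ℝ) ≤ 1 - t by linarith) ht0.le (show 1 - t + t = 1 by ring)
  simp only [smul_eq_mul] at hcvx
  have hH := H ((1 - t) • v + t • u)
  have hd : ((1 - t) • v + t • u) - v = t • (u - v) := by module
  rw [hd, real_inner_smul_right, norm_smul, Real.norm_eq_abs, mul_pow, sq_abs] at hH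
  have h2 : t * (h v + ⟪s, u - v⟫) ≤ t * (h u + t * (K / 2 * ‖u - v‖ ^ 2)) := by
    nlinarith [hH, hcvx]
  exact le_of_mul_le_mul_left h2 ht0

private lemma subgrad_of_quad_upper {h : EuclideanSpace ℝ (Fin n) → ℝ}
    (hc : ConvexOn ℝ Set.univ h) {v s : EuclideanSpace ℝ (Fin n)} {K : ℝ} (hK : 0 ≤ K)
    (H : ∀ u, h u ≤ h v + ⟪s, u - v⟫ + K / 2 * ‖u - v‖ ^ 2) :
    SubgradAt h s v := by
  intro u
  refine aux_le_of_forall_small (C := K / 2 * ‖u - v‖ ^ 2) (by positivity) (fun t ht0 ht1 => ?_)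
  have h1t : (0:ℝ) < 1 + t := by linarith
  set w := v + t • (v - u) with hw
  have hpt : (1 / (1 + t)) • w + (t / (1 + t)) • u = v := by
    rw [hw]
    match_scalars <;> field_simp <;> ring
  have hcvx := hc.2 (Set.mem_univ w) (Set.mem_univ u)
    (show (0:ℝ) ≤ 1 / (1 + t) by positivity) (show (0:ℝ) ≤ t / (1 + t) by positivity)
    (show 1 / (1 + t) + t / (1 + t) = 1 by field_simp)
  simp only [smul_eq_mul] at hcvx
  rw [hpt] at hcvx
  have hH := H w
  have hd : w - v = (-t) • (u - v) := by rw [hw]; module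
  rw [hd, real_inner_smul_right, norm_smul, Real.norm_eq_abs, mul_pow, sq_abs] at hH
  have h3 : (1 + t) * h v ≤ h w + t * h u := by
    have h4 := mul_le_mul_of_nonneg_left hcvx h1t.le
    have h5 : (1 + t) * (1 / (1 + t) * h w + t / (1 + t) * h u) = h w + t * h u := by
      field_simp
    linarith [h4, h5.le, h5.ge]
  have h6 : t * (h v + ⟪s, u - v⟫) ≤ t * (h u + t * (K / 2 * ‖u - v‖ ^ 2)) := by
    nlinarith [hH, h3]
  exact le_of_mul_le_mul_left h6 ht0

private lemma expand_norm_sq (v w : EuclideanSpace ℝ (Fin n)) :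
    ‖w‖ ^ 2 = ‖v‖ ^ 2 + 2 * ⟪v, w - v⟫ + ‖w - v‖ ^ 2 := by
  have h := norm_add_sq_real v (w - v)
  rw [show v + (w - v) = w by abel] at h
  exact h

private lemma smooth_upper {f : EuclideanSpace ℝ (Fin n) → ℝ} {c : ℝ} (hc : 0 ≤ c)
    (hconv : ConvexOn ℝ Set.univ (fun w => c / 2 * ‖w‖ ^ 2 - f w))
    {g v : EuclideanSpace ℝ (Fin n)} (hg : SubgradAt f g v) (u : EuclideanSpace ℝ (Fin n)) :
    f u ≤ f v + ⟪g, u - v⟫ + c / 2 * ‖u - v‖ ^ 2 := by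
  have hsub : SubgradAt (fun w => c / 2 * ‖w‖ ^ 2 - f w) (c • v - g) v := by
    refine subgrad_of_quad_upper hconv (K := c) hc (fun w => ?_)
    have h1 := hg w
    have hnorm := expand_norm_sq v w
    have hip : ⟪c • v - g, w - v⟫ = c * ⟪v, w - v⟫ - ⟪g, w - v⟫ := by
      rw [inner_sub_left, real_inner_smul_left]
    rw [hip]
    nlinarith [h1, hnorm]
  have h2 := hsub u
  dsimp only at h2
  have hnorm := expand_norm_sq v u
  have hip : ⟪c • v - g, u - v⟫ = c * ⟪v, u - v⟫ - ⟪g, u - v⟫ := by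
    rw [inner_sub_left, real_inner_smul_left]
  rw [hip] at h2
  nlinarith [h2, hnorm]

private lemma interp_smooth {f : EuclideanSpace ℝ (Fin n) → ℝ} {c : ℝ} (hc : 0 < c)
    (hconv : ConvexOn ℝ Set.univ (fun w => c / 2 * ‖w‖ ^ 2 - f w))
    {gu gv u v : EuclideanSpace ℝ (Fin n)}
    (hgu : SubgradAt f gu u) (hgv : SubgradAt f gv v) :
    ‖gu - gv‖ ^ 2 ≤ 2 * c * (f u - f v - ⟪gv, u - v⟫) := by
  set t : ℝ := c⁻¹ with htdef
  have htc : c * t = 1 := mul_inv_cancel₀ hc.ne'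
  have ht0 : 0 ≤ t := by positivity
  set w := u - t • (gu - gv) with hw
  have h1 := smooth_upper hc.le hconv hgu w
  have h2 := hgv w
  have e1 : w - u = (-t) • (gu - gv) := by rw [hw]; module
  have e2 : w - v = (u - v) + (-t) • (gu - gv) := by rw [hw]; module
  rw [e1, real_inner_smul_right, norm_smul, Real.norm_eq_abs, mul_pow, sq_abs] at h1
  rw [e2, inner_add_right, real_inner_smul_right] at h2
  have hgg : ⟪gu, gu - gv⟫ - ⟪gv, gu - gv⟫ = ‖gu - gv‖ ^ 2 := by
    rw [← inner_sub_left, real_inner_self_eq_norm_sq]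
  have he : c / 2 * ((-t) ^ 2 * ‖gu - gv‖ ^ 2) = t / 2 * ‖gu - gv‖ ^ 2 := by
    linear_combination (t * ‖gu - gv‖ ^ 2 / 2) * htc
  have hggt : (-t) * ⟪gu, gu - gv⟫ - (-t) * ⟪gv, gu - gv⟫ = (-t) * ‖gu - gv‖ ^ 2 := by
    rw [← mul_sub, hgg]
  -- from h1, h2 : f v + ⟪gv,u-v⟫ + t/2 * ‖gu-gv‖^2 ≤ f u
  have h8 : f v + ⟪gv, u - v⟫ + t / 2 * ‖gu - gv‖ ^ 2 ≤ f u := by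
    nlinarith [h1, h2, hggt, he]
  have h9 := mul_le_mul_of_nonneg_left h8 (by linarith : (0:ℝ) ≤ 2 * c)
  have h10 : 2 * c * (t / 2 * ‖gu - gv‖ ^ 2) = ‖gu - gv‖ ^ 2 := by
    linear_combination ‖gu - gv‖ ^ 2 * htc
  nlinarith [h9, h10]

private lemma interp {f : EuclideanSpace ℝ (Fin n) → ℝ} {μ L : ℝ}
    (hμ : 0 ≤ μ) (hμL : μ < L) (hf : MemFClass μ L f)
    {gu gv u v : EuclideanSpace ℝ (Fin n)}
    (hgu : SubgradAt f gu u) (hgv : SubgradAt f gv v) :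
    ‖gu - gv - μ • (u - v)‖ ^ 2
      ≤ (L - μ) * (2 * (f u - f v - ⟪gv, u - v⟫) - μ * ‖u - v‖ ^ 2) := by
  have hcs : ConvexOn ℝ Set.univ
      (fun w => (L - μ) / 2 * ‖w‖ ^ 2 - (f w - μ / 2 * ‖w‖ ^ 2)) := by
    have : (fun w : EuclideanSpace ℝ (Fin n) => (L - μ) / 2 * ‖w‖ ^ 2 - (f w - μ / 2 * ‖w‖ ^ 2))
        = fun w => L / 2 * ‖w‖ ^ 2 - f w := funext fun w => by ring
    rw [this]
    exact hf.2
  have hFs : ∀ (p gp : EuclideanSpace ℝ (Fin n)), SubgradAt f gp p →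
      SubgradAt (fun w => f w - μ / 2 * ‖w‖ ^ 2) (gp - μ • p) p := by
    intro p gp hgp
    refine subgrad_of_quad_lower hf.1 (K := μ) hμ (fun w => ?_)
    have h1 := hgp w
    have hnorm := expand_norm_sq p w
    have hip : ⟪gp - μ • p, w - p⟫ = ⟪gp, w - p⟫ - μ * ⟪p, w - p⟫ := by
      rw [inner_sub_left, real_inner_smul_left]
    rw [hip]
    nlinarith [h1, hnorm]
  have hco := interp_smooth (by linarith : (0:ℝ) < L - μ) hcs
    (hFs u gu hgu) (hFs v gv hgv)
  rw [show (gu - μ • u) - (gv - μ • v) = gu - gv - μ • (u - v) by module] at hco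
  have hip : ⟪gv - μ • v, u - v⟫ = ⟪gv, u - v⟫ - μ * ⟪v, u - v⟫ := by
    rw [inner_sub_left, real_inner_smul_left]
  rw [hip] at hco
  have hnorm := expand_norm_sq v u
  have hn2 : μ * (L - μ) * ‖u‖ ^ 2
      = μ * (L - μ) * (‖v‖ ^ 2 + 2 * ⟪v, u - v⟫ + ‖u - v‖ ^ 2) := by rw [← hnorm]
  linarith [hco, hn2]

end Aux

set_option maxHeartbeats 1000000 in
/-- Single-iteration inequality for the boosted DCA. -/
theorem boosted_dca_one_iteration
    (n : ℕ) (hn : 0 < n)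
    (μ L : ℝ) (hμ : 0 ≤ μ) (hμL : μ < L)
    (α : ℝ) (hα0 : 0 < α) (hα1 : α ≤ min 1 (2 * μ / L))
    (f₁ f₂ : EuclideanSpace ℝ (Fin n) → ℝ)
    (hf₁ : MemFClass μ L f₁) (hf₂ : MemFClass μ L f₂)
    (f : EuclideanSpace ℝ (Fin n) → ℝ) (hf : ∀ u, f u = f₁ u - f₂ u)
    (x y x' g₁x g₂x g₁x' g₂x' : EuclideanSpace ℝ (Fin n))
    (hg₁x : SubgradAt f₁ g₁x x) (hg₂x : SubgradAt f₂ g₂x x)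
    (hg₁x' : SubgradAt f₁ g₁x' x') (hg₂x' : SubgradAt f₂ g₂x' x')
    (hy : SubgradAt f₁ g₂x y)
    (hstep : x' = y + α • (y - x)) :
    f x' + (1 / (2 * L)) * ‖g₁x' - g₂x'‖ ^ 2
        + (1 / L) * (1 / 2 + α * μ / L) * ‖g₁x - g₂x‖ ^ 2 ≤ f x := by
  subst hstep
  have hL : (0:ℝ) < L := lt_of_le_of_lt hμ hμL
  have hA1 : α ≤ 1 := le_trans hα1 (min_le_left _ _)
  have hA2 : α ≤ 2 * μ / L := le_trans hα1 (min_le_right _ _)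
  have hαL : α * L ≤ 2 * μ := (le_div_iff₀ hL).mp hA2
  have hμ0 : (0:ℝ) < μ := by nlinarith
  have hLm : (0:ℝ) < L - μ := by linarith
  have h1 := interp hμ hμL hf₁ hg₁x hy
  have h2 := interp hμ hμL hf₁ hy hg₁x
  have h3 := interp hμ hμL hf₁ hg₁x' hy
  have h4 := interp hμ hμL hf₁ hy hg₁x'
  have h5 := interp hμ hμL hf₂ hg₂x' hg₂x
  rw [hf x, hf (y + α • (y - x))]
  have hF : (0:ℝ) < 2 * μ * L ^ 2 * (L - μ) * α := by positivity
  have keyPoly : 2 * μ * L ^ 2 * (L - μ) * α *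
        (f₁ x - f₂ x - f₁ (y + α • (y - x)) + f₂ (y + α • (y - x)))
      - μ * L * (L - μ) * α * ‖g₁x' - g₂x'‖ ^ 2
      - (μ * L * (L - μ) * α + 2 * μ ^ 2 * α ^ 2 * (L - μ)) * ‖g₁x - g₂x‖ ^ 2
      = μ * L * α * (L + 2 * α * μ) *
          ((L - μ) * (2 * (f₁ x - f₁ y - ⟪g₂x, x - y⟫) - μ * ‖x - y‖ ^ 2)
            - ‖g₁x - g₂x - μ • (x - y)‖ ^ 2)
        + 2 * μ ^ 2 * L * α ^ 2 *
          ((L - μ) * (2 * (f₁ y - f₁ x - ⟪g₁x, y - x⟫) - μ * ‖y - x‖ ^ 2)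
            - ‖g₂x - g₁x - μ • (y - x)‖ ^ 2)
        + μ * L ^ 2 * (1 - α) *
          ((L - μ) * (2 * (f₁ (y + α • (y - x)) - f₁ y - ⟪g₂x, y + α • (y - x) - y⟫)
              - μ * ‖y + α • (y - x) - y‖ ^ 2)
            - ‖g₁x' - g₂x - μ • (y + α • (y - x) - y)‖ ^ 2)
        + μ * L ^ 2 *
          ((L - μ) * (2 * (f₁ y - f₁ (y + α • (y - x)) - ⟪g₁x', y - (y + α • (y - x))⟫)
              - μ * ‖y - (y + α • (y - x))‖ ^ 2)
            - ‖g₂x - g₁x' - μ • (y - (y + α • (y - x)))‖ ^ 2)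
        + μ * L ^ 2 * α *
          ((L - μ) * (2 * (f₂ (y + α • (y - x)) - f₂ x - ⟪g₂x, y + α • (y - x) - x⟫)
              - μ * ‖y + α • (y - x) - x‖ ^ 2)
            - ‖g₂x' - g₂x - μ • (y + α • (y - x) - x)‖ ^ 2)
        + L * α * ‖(μ * L * (1 + α)) • (y - x) + L • g₂x - (L - μ) • g₁x' - μ • g₂x'‖ ^ 2
        + L ^ 2 * (2 * μ - L * α) * ‖(μ * α) • (y - x) + g₂x - g₁x'‖ ^ 2
        + μ ^ 2 * α * (L + 2 * L * α + 2 * μ * α) * ‖L • (y - x) + g₁x - g₂x‖ ^ 2 := by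
    simp only [← real_inner_self_eq_norm_sq, inner_sub_left, inner_sub_right, inner_add_left,
      inner_add_right, real_inner_smul_left, real_inner_smul_right]
    simp only [real_inner_comm y x, real_inner_comm g₁x x, real_inner_comm g₂x x,
      real_inner_comm g₁x' x, real_inner_comm g₂x' x, real_inner_comm g₁x y,
      real_inner_comm g₂x y, real_inner_comm g₁x' y, real_inner_comm g₂x' y,
      real_inner_comm g₂x g₁x, real_inner_comm g₁x' g₁x, real_inner_comm g₂x' g₁x,
      real_inner_comm g₁x' g₂x, real_inner_comm g₂x' g₂x, real_inner_comm g₂x' g₁x']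
    ring
  have key : 2 * μ * L ^ 2 * (L - μ) * α *
      ((f₁ x - f₂ x) - ((f₁ (y + α • (y - x)) - f₂ (y + α • (y - x)))
        + (1 / (2 * L)) * ‖g₁x' - g₂x'‖ ^ 2
        + (1 / L) * (1 / 2 + α * μ / L) * ‖g₁x - g₂x‖ ^ 2))
      = 2 * μ * L ^ 2 * (L - μ) * α *
        (f₁ x - f₂ x - f₁ (y + α • (y - x)) + f₂ (y + α • (y - x)))
      - μ * L * (L - μ) * α * ‖g₁x' - g₂x'‖ ^ 2
      - (μ * L * (L - μ) * α + 2 * μ ^ 2 * α ^ 2 * (L - μ)) * ‖g₁x - g₂x‖ ^ 2 := by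
    field_simp
    ring
  rw [keyPoly] at key
  have t1 : (0:ℝ) ≤ μ * L * α * (L + 2 * α * μ) *
      ((L - μ) * (2 * (f₁ x - f₁ y - ⟪g₂x, x - y⟫) - μ * ‖x - y‖ ^ 2)
        - ‖g₁x - g₂x - μ • (x - y)‖ ^ 2) :=
    mul_nonneg (by positivity) (sub_nonneg.mpr h1)
  have t2 : (0:ℝ) ≤ 2 * μ ^ 2 * L * α ^ 2 *
      ((L - μ) * (2 * (f₁ y - f₁ x - ⟪g₁x, y - x⟫) - μ * ‖y - x‖ ^ 2)
        - ‖g₂x - g₁x - μ • (y - x)‖ ^ 2) :=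
    mul_nonneg (by positivity) (sub_nonneg.mpr h2)
  have t3 : (0:ℝ) ≤ μ * L ^ 2 * (1 - α) *
      ((L - μ) * (2 * (f₁ (y + α • (y - x)) - f₁ y - ⟪g₂x, y + α • (y - x) - y⟫)
          - μ * ‖y + α • (y - x) - y‖ ^ 2)
        - ‖g₁x' - g₂x - μ • (y + α • (y - x) - y)‖ ^ 2) :=
    mul_nonneg (mul_nonneg (by positivity) (by linarith)) (sub_nonneg.mpr h3)
  have t4 : (0:ℝ) ≤ μ * L ^ 2 *
      ((L - μ) * (2 * (f₁ y - f₁ (y + α • (y - x)) - ⟪g₁x', y - (y + α • (y - x))⟫)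
          - μ * ‖y - (y + α • (y - x))‖ ^ 2)
        - ‖g₂x - g₁x' - μ • (y - (y + α • (y - x)))‖ ^ 2) :=
    mul_nonneg (by positivity) (sub_nonneg.mpr h4)
  have t5 : (0:ℝ) ≤ μ * L ^ 2 * α *
      ((L - μ) * (2 * (f₂ (y + α • (y - x)) - f₂ x - ⟪g₂x, y + α • (y - x) - x⟫)
          - μ * ‖y + α • (y - x) - x‖ ^ 2)
        - ‖g₂x' - g₂x - μ • (y + α • (y - x) - x)‖ ^ 2) :=
    mul_nonneg (by positivity) (sub_nonneg.mpr h5)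
  have t6 : (0:ℝ) ≤ L * α *
      ‖(μ * L * (1 + α)) • (y - x) + L • g₂x - (L - μ) • g₁x' - μ • g₂x'‖ ^ 2 := by positivity
  have t7 : (0:ℝ) ≤ L ^ 2 * (2 * μ - L * α) * ‖(μ * α) • (y - x) + g₂x - g₁x'‖ ^ 2 :=
    mul_nonneg (mul_nonneg (by positivity) (by linarith)) (by positivity)
  have t8 : (0:ℝ) ≤ μ ^ 2 * α * (L + 2 * L * α + 2 * μ * α) *
      ‖L • (y - x) + g₁x - g₂x‖ ^ 2 := by positivity
  have hsum : (0:ℝ) ≤ 2 * μ * L ^ 2 * (L - μ) * α *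
      ((f₁ x - f₂ x) - ((f₁ (y + α • (y - x)) - f₂ (y + α • (y - x)))
        + (1 / (2 * L)) * ‖g₁x' - g₂x'‖ ^ 2
        + (1 / L) * (1 / 2 + α * μ / L) * ‖g₁x - g₂x‖ ^ 2)) := by
    rw [key]; linarith
  have hfin := (mul_nonneg_iff_of_pos_left hF).mp hsum
  linarith
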